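/- Let (C,α,x) be an elusive triple in H(m,q) with q ≥ 3, where C has minimum distance δ = 3, and let π, π' be (C,α,x)-associates with d(π,π') = 3. Then 1 ≤ MC(π,π') ≤ 3. Moreover, if MC(π,π') = 3 and diff(α,π) = {i,j}, diff(α,π') = {j,k}, then C ∩ Γ_2(π) ∩ Γ_2(π') = { α, γ(α|i,j,k|π_i,π'_j,a), γ(α|i,j,k|c,π_j,π'_k) } for some a with a ≠ α_k and a ≠ π'_k, and some c with c ≠ α_i and c ≠ π_i. -/

import Mathlib

variable {M Q : Type*}

/-- The set of entries in which two vertices of the Hamming graph differ. -/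
def diffSet [Fintype M] [DecidableEq Q] (α β : M → Q) : Finset M :=
  Finset.univ.filter fun i => α i ≠ β i

/-- `GammaSet α r` is the set of vertices at Hamming distance exactly `r` from `α`. -/
def GammaSet [Fintype M] [DecidableEq Q] (α : M → Q) (r : ℕ) : Set (M → Q) :=
  {β | hammingDist α β = r}

/-- The neighbour set `C₁` of a code `C`. -/
def neighbourSet [Fintype M] [DecidableEq Q] (C : Set (M → Q)) : Set (M → Q) :=
  {ν | ν ∉ C ∧ ∃ c ∈ C, hammingDist ν c = 1}

/-- An automorphism of the Hamming graph: a bijection of vertices preserving Hamming distance. -/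
def IsAut [Fintype M] [DecidableEq Q] (x : (M → Q) ≃ (M → Q)) : Prop :=
  ∀ a b, hammingDist (x a) (x b) = hammingDist a b

/-- An elusive triple `(C, α, x)`. -/
def IsElusiveTriple [Fintype M] [DecidableEq Q] (C : Set (M → Q)) (α : M → Q)
    (x : (M → Q) ≃ (M → Q)) : Prop :=
  IsAut x ∧ x '' neighbourSet C = neighbourSet C ∧ α ∈ C ∧ x α ∉ C

/-- A `(C,α,x)`-associate: a vertex in `Γ₂(α) ∩ C^x`. -/
def IsAssociate [Fintype M] [DecidableEq Q] (C : Set (M → Q)) (α : M → Q)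
    (x : (M → Q) ≃ (M → Q)) (π : M → Q) : Prop :=
  π ∈ GammaSet α 2 ∧ π ∈ x '' C

/-- `MC C π π' = |C ∩ Γ₂(π) ∩ Γ₂(π')|`, the number of mutual codewords. -/
noncomputable def MC [Fintype M] [DecidableEq Q] (C : Set (M → Q)) (π π' : M → Q) : ℕ :=
  (C ∩ GammaSet π 2 ∩ GammaSet π' 2).ncard

/-- The code `C` has minimum distance `δ`. -/
def HasMinDist [Fintype M] [DecidableEq Q] (C : Set (M → Q)) (δ : ℕ) : Prop :=
  IsLeast {d : ℕ | ∃ a ∈ C, ∃ b ∈ C, a ≠ b ∧ hammingDist a b = d} δ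

/-- `IsCodeDist C β k` says that `d(β, C) = k`. -/
def IsCodeDist [Fintype M] [DecidableEq Q] (C : Set (M → Q)) (β : M → Q) (k : ℕ) : Prop :=
  IsLeast {d : ℕ | ∃ γ ∈ C, hammingDist β γ = d} k

/-- `update2 α i j a b` is the vertex `γ(α|i,j|a,b)`. -/
def update2 [DecidableEq M] (α : M → Q) (i j : M) (a b : Q) : M → Q :=
  Function.update (Function.update α i a) j b

/-- `update3 α i j k a b c` is the vertex `γ(α|i,j,k|a,b,c)`. -/
def update3 [DecidableEq M] (α : M → Q) (i j k : M) (a b c : Q) : M → Q :=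
  Function.update (Function.update (Function.update α i a) j b) k c

/-!
Write `diff(α,π) = {i,j}` and `diff(α,π') = {j,k}`; `d(π,π') = 3` forces `i, j, k` to be
distinct. A vertex at distance two from both `π` and `π'` agrees with them wherever they
agree, so every mutual codeword agrees with `α` off `{i,j,k}`. As distinct codewords are at
distance at least three, two distinct mutual codewords differ at each of `i, j, k`. A mutual
codeword `β ≠ α` differs from `π` at `k`, so it agrees with `π` at `i` or at `j`: besides `α`
there is at most one mutual codeword with `β i = π i` and one with `β j = π j`. When both
exist, the one agreeing with `π` at `j` cannot agree with `π'` there, so it agrees with `π'` at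
`k`, and then the other one must agree with `π'` at `j`.
-/

section DiffSet

variable [Fintype M] [DecidableEq Q]

@[simp]
theorem mem_diffSet {α β : M → Q} {l : M} : l ∈ diffSet α β ↔ α l ≠ β l := by
  simp [diffSet]

theorem card_diffSet (α β : M → Q) : (diffSet α β).card = hammingDist α β := rfl

theorem diffSet_comm (α β : M → Q) : diffSet α β = diffSet β α := by
  ext l
  simp [ne_comm]

theorem diffSet_subset_union [DecidableEq M] (α β γ : M → Q) :
    diffSet β γ ⊆ diffSet α β ∪ diffSet α γ := by
  intro l hl
  simp only [Finset.mem_union, mem_diffSet] at hl ⊢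
  by_contra! h
  exact hl (h.1.symm.trans h.2)

theorem hammingDist_le_card_of_eqOn_compl {β γ : M → Q} (T : Finset M)
    (h : ∀ l ∉ T, β l = γ l) : hammingDist β γ ≤ T.card :=
  Finset.card_le_card fun l hl => by
    by_contra hT
    exact mem_diffSet.1 hl (h l hT)

theorem three_le_hammingDist [DecidableEq M] {β γ : M → Q} {i j k : M}
    (hij : i ≠ j) (hjk : j ≠ k) (hik : i ≠ k)
    (hi : β i ≠ γ i) (hj : β j ≠ γ j) (hk : β k ≠ γ k) : 3 ≤ hammingDist β γ := by
  have hsub : ({i, j, k} : Finset M) ⊆ diffSet β γ := by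
    simp [Finset.insert_subset_iff, hi, hj, hk]
  have hcard : ({i, j, k} : Finset M).card = 3 :=
    Finset.card_eq_three.2 ⟨i, j, k, hij, hik, hjk, rfl⟩
  exact hcard ▸ Finset.card_le_card hsub

/-- An entry where `β` differs from `π l = π' l` is counted twice in `d(π, β) + d(π', β)`. -/
theorem apply_eq_of_hammingDist_add_lt {β π π' : M → Q}
    (h : hammingDist π β + hammingDist π' β < hammingDist π π' + 2)
    {l : M} (hl : π l = π' l) : β l = π l := by
  classical
  by_contra hne
  have hlA : l ∈ diffSet π β := mem_diffSet.2 (Ne.symm hne)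
  have hlB : l ∈ diffSet π' β := mem_diffSet.2 (hl ▸ Ne.symm hne)
  have hsub : insert l (diffSet π π') ⊆ diffSet π β ∪ diffSet π' β := by
    refine Finset.insert_subset (Finset.mem_union_left _ hlA) ?_
    rw [diffSet_comm π β, diffSet_comm π' β]
    exact diffSet_subset_union β π π'
  have hunion := Finset.card_le_card hsub
  rw [Finset.card_insert_of_notMem (by simpa using hl)] at hunion
  have hinter : 0 < (diffSet π β ∩ diffSet π' β).card :=
    Finset.card_pos.2 ⟨l, Finset.mem_inter.2 ⟨hlA, hlB⟩⟩
  have := Finset.card_union_add_card_inter (diffSet π β) (diffSet π' β)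
  simp only [card_diffSet] at hunion this
  omega

theorem apply_eq_of_diffSet_eq_pair [DecidableEq M] {α π : M → Q} {i j l : M}
    (hπ : diffSet α π = {i, j}) (hi : l ≠ i) (hj : l ≠ j) : π l = α l := by
  have : l ∉ diffSet α π := by simp [hπ, hi, hj]
  simpa [eq_comm] using this

theorem apply_ne_of_diffSet_eq_pair [DecidableEq M] {α π : M → Q} {i j : M}
    (hπ : diffSet α π = {i, j}) : α i ≠ π i ∧ α j ≠ π j := by
  simp only [← mem_diffSet, hπ, Finset.mem_insert, Finset.mem_singleton, true_or, or_true,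
    and_self]

theorem exists_diffSet_eq_pair [DecidableEq M] {α π π' : M → Q}
    (h2 : hammingDist α π = 2) (h2' : hammingDist α π' = 2) (hd : hammingDist π π' = 3) :
    ∃ i j k, diffSet α π = {i, j} ∧ diffSet α π' = {j, k} := by
  obtain ⟨j, hj⟩ : (diffSet α π ∩ diffSet α π').Nonempty := by
    rw [← Finset.not_disjoint_iff_nonempty_inter]
    intro hdisj
    have hsub : diffSet α π ∪ diffSet α π' ⊆ diffSet π π' := by
      intro l hl
      rcases Finset.mem_union.1 hl with hl | hl
      · have : α l = π' l := by simpa using Finset.disjoint_left.1 hdisj hl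
        exact mem_diffSet.2 (this ▸ (mem_diffSet.1 hl).symm)
      · have : α l = π l := by simpa using Finset.disjoint_right.1 hdisj hl
        exact mem_diffSet.2 (this ▸ mem_diffSet.1 hl)
    have := Finset.card_le_card hsub
    rw [Finset.card_union_of_disjoint hdisj] at this
    simp only [card_diffSet] at this
    omega
  rw [← card_diffSet] at h2 h2'
  obtain ⟨a, b, -, hab⟩ := Finset.card_eq_two.1 h2
  obtain ⟨c, d, -, hcd⟩ := Finset.card_eq_two.1 h2'
  have hj₁ := (Finset.mem_inter.1 hj).1
  have hj₂ := (Finset.mem_inter.1 hj).2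
  rw [hab, Finset.mem_insert, Finset.mem_singleton] at hj₁
  rw [hcd, Finset.mem_insert, Finset.mem_singleton] at hj₂
  rcases hj₁ with rfl | rfl <;> rcases hj₂ with rfl | rfl
  exacts [⟨b, j, d, hab.trans (Finset.pair_comm _ _), hcd⟩,
    ⟨b, j, c, hab.trans (Finset.pair_comm _ _), hcd.trans (Finset.pair_comm _ _)⟩,
    ⟨a, j, d, hab, hcd⟩, ⟨a, j, c, hab, hcd.trans (Finset.pair_comm _ _)⟩]

theorem ne_of_diffSet_eq_pair [DecidableEq M] {α π π' : M → Q} {i j k : M}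
    (h2 : hammingDist α π = 2) (h2' : hammingDist α π' = 2) (hd : hammingDist π π' = 3)
    (hπ : diffSet α π = {i, j}) (hπ' : diffSet α π' = {j, k}) :
    i ≠ j ∧ j ≠ k ∧ i ≠ k := by
  refine ⟨?_, ?_, ?_⟩
  · rintro rfl
    simp [← card_diffSet, hπ] at h2
  · rintro rfl
    simp [← card_diffSet, hπ'] at h2'
  · rintro rfl
    have : hammingDist π π' ≤ ({i, j} : Finset M).card :=
      hammingDist_le_card_of_eqOn_compl _ fun l hl => by
        simp only [Finset.mem_insert, Finset.mem_singleton, not_or] at hl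
        rw [apply_eq_of_diffSet_eq_pair hπ hl.1 hl.2,
          apply_eq_of_diffSet_eq_pair hπ' hl.2 hl.1]
    have := Finset.card_le_two (a := i) (b := j)
    omega

theorem apply_ne_apply_of_diffSet_eq_pair [DecidableEq M] {α π π' : M → Q} {i j k : M}
    (hd : hammingDist π π' = 3) (hπ : diffSet α π = {i, j}) (hπ' : diffSet α π' = {j, k}) :
    π j ≠ π' j := by
  intro hj
  have : hammingDist π π' ≤ ({i, k} : Finset M).card :=
    hammingDist_le_card_of_eqOn_compl _ fun l hl => by
      simp only [Finset.mem_insert, Finset.mem_singleton, not_or] at hl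
      by_cases hlj : l = j
      · rwa [hlj]
      rw [apply_eq_of_diffSet_eq_pair hπ hl.1 hlj, apply_eq_of_diffSet_eq_pair hπ' hlj hl.2]
  have := Finset.card_le_two (a := i) (b := k)
  omega

end DiffSet

theorem eq_update3 [DecidableEq M] {α β : M → Q} {i j k : M}
    (h : ∀ l, l ≠ i → l ≠ j → l ≠ k → β l = α l) :
    β = update3 α i j k (β i) (β j) (β k) := by
  funext l
  simp only [update3, Function.update_apply]
  split_ifs with hk hj hi
  · rw [hk]
  · rw [hj]
  · rw [hi]
  · exact h l hi hj hk

theorem Set.Subsingleton.ncard_le_one {X : Type*} {s : Set X} (hs : s.Subsingleton) :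
    s.ncard ≤ 1 :=
  (Set.ncard_le_one hs.finite).2 fun _ ha _ hb => hs ha hb

theorem Set.ncard_insert_union_le {X : Type*} (a : X) (A B : Set X) :
    (insert a (A ∪ B)).ncard ≤ A.ncard + B.ncard + 1 :=
  (Set.ncard_insert_le a _).trans (Nat.add_le_add_right (Set.ncard_union_le A B) 1)

theorem Set.exists_eq_singleton_of_ncard_insert_union_eq_three {X : Type*} {a : X}
    {A B : Set X} (hA : A.Subsingleton) (hB : B.Subsingleton)
    (h : (insert a (A ∪ B)).ncard = 3) : ∃ b c, A = {b} ∧ B = {c} ∧ b ≠ c := by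
  have hle := Set.ncard_insert_union_le a A B
  have hA1 := hA.ncard_le_one
  have hB1 := hB.ncard_le_one
  obtain ⟨b, rfl⟩ := Set.ncard_eq_one.1 (by omega : A.ncard = 1)
  obtain ⟨c, rfl⟩ := Set.ncard_eq_one.1 (by omega : B.ncard = 1)
  refine ⟨b, c, rfl, rfl, ?_⟩
  rintro rfl
  rw [Set.union_self] at h
  have := Set.ncard_insert_le a {b}
  rw [Set.ncard_singleton] at this
  omega

def mutualCodewords [Fintype M] [DecidableEq Q] (C : Set (M → Q)) (π π' : M → Q) :
    Set (M → Q) :=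
  C ∩ GammaSet π 2 ∩ GammaSet π' 2

theorem mem_mutualCodewords [Fintype M] [DecidableEq Q] {C : Set (M → Q)} {β π π' : M → Q} :
    β ∈ mutualCodewords C π π' ↔ β ∈ C ∧ hammingDist π β = 2 ∧ hammingDist π' β = 2 :=
  and_assoc

section MutualCodewords

variable [Fintype M] [DecidableEq M] [DecidableEq Q] {C : Set (M → Q)} {α β γ π π' : M → Q}
  {i j k : M}

theorem apply_eq_of_mem_mutualCodewords (hd : hammingDist π π' = 3)
    (hπ : diffSet α π = {i, j}) (hπ' : diffSet α π' = {j, k})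
    (hβ : β ∈ mutualCodewords C π π') {l : M} (hi : l ≠ i) (hj : l ≠ j) (hk : l ≠ k) :
    β l = α l := by
  obtain ⟨-, hπβ, hπ'β⟩ := mem_mutualCodewords.1 hβ
  have hl : π l = α l := apply_eq_of_diffSet_eq_pair hπ hi hj
  rw [← hl]
  exact apply_eq_of_hammingDist_add_lt (by omega)
    (hl.trans (apply_eq_of_diffSet_eq_pair hπ' hj hk).symm)

theorem eq_of_apply_eq_of_mem_mutualCodewords
    (hC : ∀ β ∈ C, ∀ γ ∈ C, β ≠ γ → 3 ≤ hammingDist β γ) (hd : hammingDist π π' = 3)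
    (hπ : diffSet α π = {i, j}) (hπ' : diffSet α π' = {j, k})
    (hβ : β ∈ mutualCodewords C π π') (hγ : γ ∈ mutualCodewords C π π')
    {t : M} (ht : t ∈ ({i, j, k} : Finset M)) (h : β t = γ t) : β = γ := by
  by_contra hne
  have h3 := hC β hβ.1.1 γ hγ.1.1 hne
  have h2 : hammingDist β γ ≤ (({i, j, k} : Finset M).erase t).card := by
    refine hammingDist_le_card_of_eqOn_compl _ fun l hl => ?_
    by_cases hlt : l = t
    · rwa [hlt]
    simp only [Finset.mem_erase, hlt, Finset.mem_insert, Finset.mem_singleton, ne_eq,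
      not_false_eq_true, true_and, not_or] at hl
    rw [apply_eq_of_mem_mutualCodewords hd hπ hπ' hβ hl.1 hl.2.1 hl.2.2,
      apply_eq_of_mem_mutualCodewords hd hπ hπ' hγ hl.1 hl.2.1 hl.2.2]
  rw [Finset.card_erase_of_mem ht] at h2
  have := Finset.card_le_three (a := i) (b := j) (c := k)
  omega

theorem subsingleton_setOf_apply_eq
    (hC : ∀ β ∈ C, ∀ γ ∈ C, β ≠ γ → 3 ≤ hammingDist β γ) (hd : hammingDist π π' = 3)
    (hπ : diffSet α π = {i, j}) (hπ' : diffSet α π' = {j, k})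
    {t : M} (ht : t ∈ ({i, j, k} : Finset M)) (v : Q) :
    {β ∈ mutualCodewords C π π' | β t = v}.Subsingleton :=
  fun _ hβ _ hγ =>
    eq_of_apply_eq_of_mem_mutualCodewords hC hd hπ hπ' hβ.1 hγ.1 ht (hβ.2.trans hγ.2.symm)

theorem apply_eq_or_apply_eq_of_mem_mutualCodewords
    (hC : ∀ β ∈ C, ∀ γ ∈ C, β ≠ γ → 3 ≤ hammingDist β γ) (hd : hammingDist π π' = 3)
    (hπ : diffSet α π = {i, j}) (hπ' : diffSet α π' = {j, k})
    (hij : i ≠ j) (hjk : j ≠ k) (hik : i ≠ k)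
    (hα : α ∈ mutualCodewords C π π') (hβ : β ∈ mutualCodewords C π π') (hβα : β ≠ α) :
    (β i = π i ∨ β j = π j) ∧ (β j = π' j ∨ β k = π' k) := by
  have hne {t : M} (ht : t ∈ ({i, j, k} : Finset M)) : β t ≠ α t := fun h =>
    hβα (eq_of_apply_eq_of_mem_mutualCodewords hC hd hπ hπ' hβ hα ht h)
  have hi := hne (t := i) (by simp)
  have hj := hne (t := j) (by simp)
  have hk := hne (t := k) (by simp)
  obtain ⟨-, hπβ, hπ'β⟩ := mem_mutualCodewords.1 hβ
  rw [hammingDist_comm] at hπβ hπ'β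
  constructor
  · by_contra! h
    have := three_le_hammingDist hij hjk hik h.1 h.2
      (by rwa [apply_eq_of_diffSet_eq_pair hπ hik.symm hjk.symm])
    omega
  · by_contra! h
    have := three_le_hammingDist hij hjk hik (by rwa [apply_eq_of_diffSet_eq_pair hπ' hij hik])
      h.1 h.2
    omega

theorem mutualCodewords_eq_insert_union
    (hC : ∀ β ∈ C, ∀ γ ∈ C, β ≠ γ → 3 ≤ hammingDist β γ) (hd : hammingDist π π' = 3)
    (hπ : diffSet α π = {i, j}) (hπ' : diffSet α π' = {j, k})
    (hij : i ≠ j) (hjk : j ≠ k) (hik : i ≠ k) (hα : α ∈ mutualCodewords C π π') :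
    mutualCodewords C π π' = insert α
      ({β ∈ mutualCodewords C π π' | β i = π i} ∪ {β ∈ mutualCodewords C π π' | β j = π j}) := by
  refine Set.Subset.antisymm (fun β hβ => ?_)
    (Set.insert_subset hα (Set.union_subset (Set.sep_subset _ _) (Set.sep_subset _ _)))
  by_cases hβα : β = α
  · exact Or.inl hβα
  rcases (apply_eq_or_apply_eq_of_mem_mutualCodewords hC hd hπ hπ' hij hjk hik hα hβ hβα).1
    with h | h
  exacts [Or.inr (Or.inl ⟨hβ, h⟩), Or.inr (Or.inr ⟨hβ, h⟩)]

theorem ncard_mutualCodewords_le_three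
    (hC : ∀ β ∈ C, ∀ γ ∈ C, β ≠ γ → 3 ≤ hammingDist β γ) (hd : hammingDist π π' = 3)
    (hπ : diffSet α π = {i, j}) (hπ' : diffSet α π' = {j, k})
    (hij : i ≠ j) (hjk : j ≠ k) (hik : i ≠ k) (hα : α ∈ mutualCodewords C π π') :
    (mutualCodewords C π π').ncard ≤ 3 := by
  rw [mutualCodewords_eq_insert_union hC hd hπ hπ' hij hjk hik hα]
  have := Set.ncard_insert_union_le α {β ∈ mutualCodewords C π π' | β i = π i}
    {β ∈ mutualCodewords C π π' | β j = π j}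
  have := (subsingleton_setOf_apply_eq hC hd hπ hπ' (t := i) (by simp) (π i)).ncard_le_one
  have := (subsingleton_setOf_apply_eq hC hd hπ hπ' (t := j) (by simp) (π j)).ncard_le_one
  omega

theorem mutualCodewords_eq_of_ncard_eq_three
    (hC : ∀ β ∈ C, ∀ γ ∈ C, β ≠ γ → 3 ≤ hammingDist β γ) (hd : hammingDist π π' = 3)
    (hπ : diffSet α π = {i, j}) (hπ' : diffSet α π' = {j, k})
    (hij : i ≠ j) (hjk : j ≠ k) (hik : i ≠ k) (hα : α ∈ mutualCodewords C π π')
    (h3 : (mutualCodewords C π π').ncard = 3) :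
    ∃ a c : Q, a ≠ α k ∧ a ≠ π' k ∧ c ≠ α i ∧ c ≠ π i ∧
      mutualCodewords C π π' =
        {α, update3 α i j k (π i) (π' j) a, update3 α i j k c (π j) (π' k)} := by
  have hM := mutualCodewords_eq_insert_union hC hd hπ hπ' hij hjk hik hα
  obtain ⟨β, γ, hPi, hPj, hβγ⟩ := Set.exists_eq_singleton_of_ncard_insert_union_eq_three
    (subsingleton_setOf_apply_eq hC hd hπ hπ' (t := i) (by simp) (π i))
    (subsingleton_setOf_apply_eq hC hd hπ hπ' (t := j) (by simp) (π j)) (hM ▸ h3)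
  obtain ⟨hβ, hβi⟩ : β ∈ {β ∈ mutualCodewords C π π' | β i = π i} := hPi ▸ rfl
  obtain ⟨hγ, hγj⟩ : γ ∈ {β ∈ mutualCodewords C π π' | β j = π j} := hPj ▸ rfl
  have hinj {β γ : M → Q} (hβ : β ∈ mutualCodewords C π π') (hγ : γ ∈ mutualCodewords C π π')
      {t : M} (ht : t ∈ ({i, j, k} : Finset M)) (h : β t = γ t) : β = γ :=
    eq_of_apply_eq_of_mem_mutualCodewords hC hd hπ hπ' hβ hγ ht h
  have hcover {β : M → Q} := apply_eq_or_apply_eq_of_mem_mutualCodewords (β := β)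
    hC hd hπ hπ' hij hjk hik hα
  obtain ⟨hαπi, hαπj⟩ := apply_ne_of_diffSet_eq_pair hπ
  have hππ'j := apply_ne_apply_of_diffSet_eq_pair hd hπ hπ'
  have hβα : β ≠ α := fun h => hαπi (h ▸ hβi)
  have hγα : γ ≠ α := fun h => hαπj (h ▸ hγj)
  have hγk : γ k = π' k := (hcover hγ hγα).2.resolve_left (hγj ▸ hππ'j)
  have hβj : β j = π' j := (hcover hβ hβα).2.resolve_right fun h =>
    hβγ (hinj hβ hγ (t := k) (by simp) (h.trans hγk.symm))
  refine ⟨β k, γ i, fun h => hβα (hinj hβ hα (by simp) h),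
    fun h => hβγ (hinj hβ hγ (t := k) (by simp) (h.trans hγk.symm)),
    fun h => hγα (hinj hγ hα (by simp) h),
    fun h => hβγ (hinj hβ hγ (t := i) (by simp) (hβi.trans h.symm)), ?_⟩
  have hsupp {β : M → Q} (hβ : β ∈ mutualCodewords C π π') :=
    eq_update3 fun l => apply_eq_of_mem_mutualCodewords hd hπ hπ' hβ (l := l)
  rw [hM, hPi, hPj, Set.singleton_union, ← hβi, ← hβj, ← hγj, ← hγk, ← hsupp hβ, ← hsupp hγ]

end MutualCodewords

theorem stmt_7_general (m q : ℕ) (C : Set (Fin m → Fin q)) (α : Fin m → Fin q)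
    (x : (Fin m → Fin q) ≃ (Fin m → Fin q))
    (hET : IsElusiveTriple C α x) (hδ : HasMinDist C 3)
    (π π' : Fin m → Fin q)
    (hπ : IsAssociate C α x π) (hπ' : IsAssociate C α x π')
    (hd : hammingDist π π' = 3) :
    (1 ≤ MC C π π' ∧ MC C π π' ≤ 3) ∧
    (∀ i j k : Fin m, MC C π π' = 3 →
      diffSet α π = {i, j} → diffSet α π' = {j, k} →
      ∃ a c : Fin q, a ≠ α k ∧ a ≠ π' k ∧ c ≠ α i ∧ c ≠ π i ∧
        C ∩ GammaSet π 2 ∩ GammaSet π' 2 =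
          {α, update3 α i j k (π i) (π' j) a, update3 α i j k c (π j) (π' k)}) := by
  have hC : ∀ β ∈ C, ∀ γ ∈ C, β ≠ γ → 3 ≤ hammingDist β γ :=
    fun β hβ γ hγ hne => hδ.2 ⟨β, hβ, γ, hγ, hne, rfl⟩
  have hα : α ∈ mutualCodewords C π π' := mem_mutualCodewords.2
    ⟨hET.2.2.1, by rw [hammingDist_comm, hπ.1], by rw [hammingDist_comm, hπ'.1]⟩
  refine ⟨⟨(Set.ncard_pos (Set.toFinite _)).2 ⟨α, hα⟩, ?_⟩, fun i j k h3 hπij hπ'jk => ?_⟩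
  · obtain ⟨i, j, k, hπij, hπ'jk⟩ := exists_diffSet_eq_pair hπ.1 hπ'.1 hd
    obtain ⟨hij, hjk, hik⟩ := ne_of_diffSet_eq_pair hπ.1 hπ'.1 hd hπij hπ'jk
    exact ncard_mutualCodewords_le_three hC hd hπij hπ'jk hij hjk hik hα
  · obtain ⟨hij, hjk, hik⟩ := ne_of_diffSet_eq_pair hπ.1 hπ'.1 hd hπij hπ'jk
    exact mutualCodewords_eq_of_ncard_eq_three hC hd hπij hπ'jk hij hjk hik hα h3

/-- For an elusive triple with `δ = 3`, `q ≥ 3`, and associates `π, π'` at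
distance 3, we have `1 ≤ MC(π,π') ≤ 3`; and if `MC(π,π') = 3` with `diff(α,π) = {i,j}`
and `diff(α,π') = {j,k}`, then `C ∩ Γ₂(π) ∩ Γ₂(π')` has the stated explicit form. -/
theorem stmt_7 (m q : ℕ) (hq : 3 ≤ q) (C : Set (Fin m → Fin q)) (α : Fin m → Fin q)
    (x : (Fin m → Fin q) ≃ (Fin m → Fin q))
    (hET : IsElusiveTriple C α x) (hδ : HasMinDist C 3)
    (π π' : Fin m → Fin q)
    (hπ : IsAssociate C α x π) (hπ' : IsAssociate C α x π')
    (hd : hammingDist π π' = 3) :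
    (1 ≤ MC C π π' ∧ MC C π π' ≤ 3) ∧
    (∀ i j k : Fin m, MC C π π' = 3 →
      diffSet α π = {i, j} → diffSet α π' = {j, k} →
      ∃ a c : Fin q, a ≠ α k ∧ a ≠ π' k ∧ c ≠ α i ∧ c ≠ π i ∧
        C ∩ GammaSet π 2 ∩ GammaSet π' 2 =
          {α, update3 α i j k (π i) (π' j) a, update3 α i j k c (π j) (π' k)}) :=
  stmt_7_general m q C α x hET hδ π π' hπ hπ' hd
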